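/- arXiv:1805.04585 — 4 statements merged into one kernel-verified Lean document; each statement's English description precedes it below -/
import Mathlib

section
/- Let k be a perfect subfield of ℂ. Then the fixed field of the automorphism group Aut(ℂ/k) acting on ℂ is exactly k. -/
/-!
If `x` is fixed by `Aut(Ω/K)`, then `x` lies in the algebraic closure `L` of `K` in `Ω`: otherwise
`x` is transcendental over `L`, and the translation `x ↦ x + 1` of a transcendence basis through
`x` extends to `Ω`, because `Ω` is an algebraic closure of the polynomial ring on that basis.
The same extension argument lifts every automorphism of `L/K` to `Ω`, so `x` is fixed by
`Gal(L/K)`; as `K` is perfect, `L/K` is Galois and hence `x ∈ K`.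
-/

namespace MvPolynomial

variable {R ι : Type*} [CommRing R]

noncomputable def translate (a : ι → R) : MvPolynomial ι R ≃ₐ[R] MvPolynomial ι R :=
  AlgEquiv.ofAlgHom (aeval fun i => X i + C (a i)) (aeval fun i => X i - C (a i))
    (by ext i; simp) (by ext i; simp)

@[simp]
theorem translate_X (a : ι → R) (i : ι) : translate a (X i) = X i + C (a i) :=
  aeval_X _ i

end MvPolynomial

open MvPolynomial

section Extension

variable {K R Ω ι : Type*} [CommRing R] [Field Ω] [IsAlgClosed Ω] [Algebra R Ω]

theorem IsTranscendenceBasis.exists_ringEquiv_aeval {v : ι → Ω}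
    (hv : IsTranscendenceBasis R v) (e : MvPolynomial ι R ≃+* MvPolynomial ι R) :
    ∃ σ : Ω ≃+* Ω, ∀ p, σ (aeval v p) = aeval v (e p) := by
  have := IsAlgClosed.isAlgClosure_of_transcendence_basis v hv
  let φ := hv.1.aevalEquiv
  refine ⟨IsAlgClosure.equivOfEquiv Ω Ω (φ.symm.toRingEquiv.trans (e.trans φ.toRingEquiv)),
    fun p => ?_⟩
  rw [← hv.1.algebraMap_aevalEquiv, ← hv.1.algebraMap_aevalEquiv,
    IsAlgClosure.equivOfEquiv_algebraMap]
  simp [φ]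

variable [CommRing K] [Algebra K R] [Algebra K Ω] [IsScalarTower K R Ω]

theorem IsTranscendenceBasis.exists_algEquiv_aeval {v : ι → Ω}
    (hv : IsTranscendenceBasis R v) (e : MvPolynomial ι R ≃ₐ[K] MvPolynomial ι R) :
    ∃ σ : Ω ≃ₐ[K] Ω, ∀ p, σ (aeval v p) = aeval v (e p) := by
  obtain ⟨σ, hσ⟩ := hv.exists_ringEquiv_aeval e.toRingEquiv
  refine ⟨AlgEquiv.ofRingEquiv (f := σ) fun c => ?_, hσ⟩
  have hc : algebraMap K Ω c = aeval v (algebraMap K (MvPolynomial ι R) c) :=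
    ((aeval v).restrictScalars K).commutes c |>.symm
  rw [hc, hσ]; exact congrArg _ (e.commutes c)

theorem exists_algEquiv_algebraMap_apply [FaithfulSMul R Ω] (τ : R ≃ₐ[K] R) :
    ∃ σ : Ω ≃ₐ[K] Ω, ∀ r, σ (algebraMap R Ω r) = algebraMap R Ω (τ r) := by
  obtain ⟨s, hs⟩ := exists_isTranscendenceBasis R Ω
  obtain ⟨σ, hσ⟩ := hs.exists_algEquiv_aeval (mapAlgEquiv s τ)
  exact ⟨σ, fun r => by simpa using hσ (MvPolynomial.C r)⟩

end Extension

theorem Transcendental.exists_algEquiv_apply_eq_add_one {R Ω : Type*} [CommRing R] [Field Ω]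
    [IsAlgClosed Ω] [Algebra R Ω] {x : Ω} (hx : Transcendental R x) :
    ∃ σ : Ω ≃ₐ[R] Ω, σ x = x + 1 := by
  have hind : AlgebraicIndepOn R id {x} := algebraicIndependent_unique_type_iff.2 hx
  obtain ⟨s, hxs, hs⟩ := exists_isTranscendenceBasis_superset hind
  let i : s := ⟨x, hxs rfl⟩
  classical
  obtain ⟨σ, hσ⟩ := hs.exists_algEquiv_aeval (translate (Pi.single i 1))
  exact ⟨σ, by simpa [i] using hσ (X i)⟩

theorem IsAlgClosed.mem_range_algebraMap_iff_forall_algEquiv_apply_eq {K Ω : Type*} [Field K]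
    [PerfectField K] [Field Ω] [IsAlgClosed Ω] [Algebra K Ω] (x : Ω) :
    x ∈ Set.range (algebraMap K Ω) ↔ ∀ σ : Ω ≃ₐ[K] Ω, σ x = x := by
  refine ⟨fun ⟨c, hc⟩ σ => hc ▸ σ.commutes c, fun hx => ?_⟩
  set L := algebraicClosure K Ω
  have hxL : x ∈ L := by
    by_contra hxL
    have hxT : Transcendental L x :=
      (Algebra.IsAlgebraic.transcendental_iff K L).1 (mt mem_algebraicClosure_iff.2 hxL)
    obtain ⟨σ, hσ⟩ := hxT.exists_algEquiv_apply_eq_add_one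
    simpa [hσ] using hx (σ.restrictScalars K)
  have hfix : ∀ τ : L ≃ₐ[K] L, τ ⟨x, hxL⟩ = ⟨x, hxL⟩ := fun τ => by
    obtain ⟨σ, hσ⟩ := exists_algEquiv_algebraMap_apply (Ω := Ω) τ
    exact Subtype.val_injective ((hσ _).symm.trans (hx σ))
  obtain ⟨c, hc⟩ := (InfiniteGalois.mem_range_algebraMap_iff_fixed _).2 hfix
  exact ⟨c, congrArg Subtype.val hc⟩

/-- Let `k` be a subfield of ℂ (automatically perfect, being of
characteristic 0).  Then the fixed field of the automorphism group `Aut(ℂ/k)`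
acting on ℂ is exactly `k`. -/
theorem stmt_10 (k : Subfield ℂ) :
    ∀ x : ℂ, (∀ σ : ℂ ≃ₐ[k] ℂ, σ x = x) ↔ x ∈ k := by
  intro x
  rw [← IsAlgClosed.mem_range_algebraMap_iff_forall_algEquiv_apply_eq]
  exact Iff.of_eq (congrArg (x ∈ ·) Subtype.range_val)
end

section
/- Let X ⊆ ℂⁿ be an irreducible affine variety defined over a subfield k₀ of ℂ (its minimal field of definition), let k be a subfield of ℂ containing k₀, and let f ∈ ℂ[X] be the image of a polynomial with integer coefficients such that ℂ[X] is a free ℂ[f]-module of rank d with a basis contained in the image of ℤ[z₁,…,z_n]. Then T_k(X), the k-subalgebra of ℂ[X] generated by the images of the coordinate functions, is a free k[f]-module of rank d. -/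
/-!
Choose a `k`-linear retraction `π : ℂ → k` of the inclusion and apply it to the coefficients
of polynomials. The resulting map `ρ : ℂ[z] → k[z]` is `k[z]`-linear, so it sends the ideal of
`X`, which is generated by polynomials with coefficients in `k`, into its `k`-part, and it sends
`ℂ[f]` into `k[f]`. Given `t ∈ T_k(X)`, lift `t = p mod I` with `p ∈ k[z]` and its expansion
`t = ∑ aᵢ bᵢ` with `aᵢ ∈ ℂ[f]` to a polynomial `P = ∑ Aᵢ cᵢ`; then `p - P ∈ I`, so applying `ρ`
gives `t = ∑ ρ(Aᵢ) bᵢ` with `ρ(Aᵢ) ∈ k[f]`. Linear independence over `k[f] ⊆ ℂ[f]` is inherited.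
-/

open MvPolynomial

theorem LinearIndependent.of_subalgebra_le {ι R R' A : Type*} [CommSemiring R] [CommSemiring R']
    [Semiring A] [Algebra R A] [Algebra R' A] {S : Subalgebra R A} {S' : Subalgebra R' A}
    (h : (S : Set A) ⊆ S') {v : ι → A} (hv : LinearIndependent S' v) : LinearIndependent S v :=
  hv.map_of_injective_injectiveₛ (Set.inclusion h) (AddMonoidHom.id A)
    (Set.inclusion_injective h) Function.injective_id fun _ _ => rfl

namespace MvPolynomial

section Coeffwise

variable {σ K L : Type*} [CommSemiring K] [CommSemiring L] [Algebra K L]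

noncomputable def coeffwise (π : L →ₗ[K] K) : MvPolynomial σ L →ₗ[K] MvPolynomial σ K where
  toFun p := AddMonoidAlgebra.map π.toAddMonoidHom p
  map_add' p q := by ext m; simp
  map_smul' a p := by ext m; simp

variable (π : L →ₗ[K] K)

@[simp]
theorem coeff_coeffwise (p : MvPolynomial σ L) (m : σ →₀ ℕ) :
    coeff m (coeffwise π p) = π (coeff m p) := rfl

theorem coeffwise_smul_map (a : L) (q : MvPolynomial σ K) :
    coeffwise π (a • map (algebraMap K L) q) = π a • q := by
  ext m
  rw [coeff_coeffwise, coeff_smul, coeff_map, coeff_smul, smul_eq_mul, mul_comm,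
    ← Algebra.smul_def, map_smul, smul_eq_mul, smul_eq_mul, mul_comm]

theorem coeffwise_mul_map (p : MvPolynomial σ L) (q : MvPolynomial σ K) :
    coeffwise π (p * map (algebraMap K L) q) = coeffwise π p * q := by
  classical
  ext m
  rw [coeff_coeffwise, coeff_mul, coeff_mul, map_sum]
  refine Finset.sum_congr rfl fun x _ => ?_
  rw [coeff_coeffwise, coeff_map, mul_comm, ← Algebra.smul_def, map_smul, smul_eq_mul, mul_comm]

theorem coeffwise_map (hπ : ∀ a, π (algebraMap K L a) = a) (q : MvPolynomial σ K) :
    coeffwise π (map (algebraMap K L) q) = q := by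
  ext m
  rw [coeff_coeffwise, coeff_map, hπ]

/- `coeffwise π` commutes only with multiplication by polynomials over `K`, so the two induction
proofs below are run on all multiples of `p`. -/

theorem coeffwise_mem_span {S : Set (MvPolynomial σ K)} {p : MvPolynomial σ L}
    (hp : p ∈ Submodule.span L (map (algebraMap K L) '' S)) :
    coeffwise π p ∈ Submodule.span K S := by
  suffices ∀ a : L, coeffwise π (a • p) ∈ Submodule.span K S by simpa using this 1
  induction hp using Submodule.span_induction with
  | mem _ hx =>
    obtain ⟨q, hq, rfl⟩ := hx
    intro a
    rw [coeffwise_smul_map]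
    exact Submodule.smul_mem _ _ (Submodule.subset_span hq)
  | zero => simp
  | add _ _ _ _ hx hy => intro a; rw [smul_add, map_add]; exact add_mem (hx a) (hy a)
  | smul b _ _ hx => intro a; rw [smul_smul]; exact hx (a * b)

theorem coeffwise_mem_of_mem_map {J : Ideal (MvPolynomial σ K)} {p : MvPolynomial σ L}
    (hp : p ∈ J.map (map (algebraMap K L))) : coeffwise π p ∈ J := by
  suffices ∀ a, coeffwise π (a * p) ∈ J by simpa using this 1
  induction hp using Submodule.span_induction with
  | mem _ hx =>
    obtain ⟨q, hq, rfl⟩ := hx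
    intro a
    rw [coeffwise_mul_map]
    exact J.mul_mem_left _ hq
  | zero => simp
  | add _ _ _ _ hx hy => intro a; rw [mul_add, map_add]; exact add_mem (hx a) (hy a)
  | smul b _ _ hx => intro a; rw [smul_eq_mul, ← mul_assoc]; exact hx (a * b)

theorem coeffwise_mem_adjoin_singleton {g : MvPolynomial σ K} {p : MvPolynomial σ L}
    (hp : p ∈ Algebra.adjoin L {map (algebraMap K L) g}) :
    coeffwise π p ∈ Algebra.adjoin K {g} := by
  rw [← Subalgebra.mem_toSubmodule, Algebra.adjoin_eq_span] at hp ⊢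
  rw [← Set.image_singleton, ← MonoidHom.map_mclosure] at hp
  exact coeffwise_mem_span π hp

end Coeffwise

theorem eq_map_comap_of_eq_span {σ L : Type*} [Field L] {k₀ k : Subfield L}
    (hk : k₀ ≤ k) {I : Ideal (MvPolynomial σ L)}
    (h : I = Ideal.span {p | p ∈ I ∧ ∀ m, coeff m p ∈ k₀}) :
    I = (I.comap (map (algebraMap k L))).map (map (algebraMap k L)) := by
  refine le_antisymm ?_ Ideal.map_comap_le
  conv_lhs => rw [h]
  refine Ideal.span_le.mpr fun p ⟨hpI, hpk⟩ => ?_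
  obtain ⟨q, rfl⟩ : p ∈ Set.range (map (algebraMap k L)) := by
    refine mem_range_map_iff_coeffs_subset.mpr fun a ha => ?_
    obtain ⟨m, -, rfl⟩ := mem_coeffs_iff.mp ha
    exact ⟨⟨_, hk (hpk m)⟩, rfl⟩
  exact Ideal.mem_map_of_mem _ hpI

section Descent

variable {σ ι K L Q : Type*} [CommSemiring K] [CommSemiring L] [Algebra K L]
  [CommSemiring Q] [Algebra K Q] [Algebra L Q] [IsScalarTower K L Q] {x : σ → Q}

theorem linearIndependent_aeval (g : MvPolynomial σ K) (c : ι → MvPolynomial σ K)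
    (B : Module.Basis ι (Algebra.adjoin L {aeval x g}) Q) (hB : ∀ i, B i = aeval x (c i)) :
    LinearIndependent (Algebra.adjoin K {aeval x g}) fun i => aeval x (c i) := by
  rw [← _root_.funext hB]
  have hle : Algebra.adjoin K {aeval x g} ≤ (Algebra.adjoin L {aeval x g}).restrictScalars K :=
    Algebra.adjoin_le Algebra.subset_adjoin
  exact B.linearIndependent.of_subalgebra_le hle

theorem span_aeval_subset_adjoin_range (g : MvPolynomial σ K) (c : ι → MvPolynomial σ K) :
    (Submodule.span (Algebra.adjoin K {aeval x g}) (Set.range fun i => aeval x (c i)) : Set Q) ⊆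
      Algebra.adjoin K (Set.range x) := by
  have hg : (Algebra.adjoin K {aeval x g} : Set Q) ⊆ Algebra.adjoin K (Set.range x) := by
    rw [Algebra.adjoin_range_eq_range_aeval]
    exact Algebra.adjoin_le (Set.singleton_subset_iff.mpr ⟨g, rfl⟩)
  intro t ht
  induction ht using Submodule.span_induction with
  | mem _ h =>
    obtain ⟨i, rfl⟩ := h
    rw [SetLike.mem_coe, Algebra.adjoin_range_eq_range_aeval]
    exact ⟨c i, rfl⟩
  | zero => exact zero_mem _
  | add _ _ _ _ h₁ h₂ => exact add_mem h₁ h₂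
  | smul a _ _ h => exact mul_mem (hg a.2) h

end Descent

section DescentRing

variable {σ ι K L Q : Type*} [CommRing K] [CommRing L] [Algebra K L]
  [CommRing Q] [Algebra K Q] [Algebra L Q] [IsScalarTower K L Q]
  {x : σ → Q} {J : Ideal (MvPolynomial σ K)}

theorem aeval_coeffwise_eq
    (hker : RingHom.ker (aeval x : MvPolynomial σ L →ₐ[L] Q) = J.map (map (algebraMap K L)))
    {π : L →ₗ[K] K} (hπ : ∀ a, π (algebraMap K L a) = a)
    {p : MvPolynomial σ L} {q : MvPolynomial σ K} (h : aeval x p = aeval x q) :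
    aeval x (coeffwise π p) = aeval x q := by
  have hJ : ∀ j ∈ J, aeval x j = 0 := fun j hj => by
    rw [← aeval_map_algebraMap L, ← RingHom.mem_ker, hker]
    exact Ideal.mem_map_of_mem _ hj
  have hpq : p - map (algebraMap K L) q ∈ J.map (map (algebraMap K L)) := by
    rw [← hker, RingHom.mem_ker, map_sub, aeval_map_algebraMap, h, sub_self]
  have := hJ _ (coeffwise_mem_of_mem_map π hpq)
  rwa [map_sub, coeffwise_map π hπ, map_sub, sub_eq_zero] at this

theorem adjoin_range_subset_span_aeval
    (hker : RingHom.ker (aeval x : MvPolynomial σ L →ₐ[L] Q) = J.map (map (algebraMap K L)))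
    {π : L →ₗ[K] K} (hπ : ∀ a, π (algebraMap K L a) = a)
    [Fintype ι] (g : MvPolynomial σ K) (c : ι → MvPolynomial σ K)
    (B : Module.Basis ι (Algebra.adjoin L {aeval x g}) Q) (hB : ∀ i, B i = aeval x (c i)) :
    (Algebra.adjoin K (Set.range x) : Set Q) ⊆
      Submodule.span (Algebra.adjoin K {aeval x g}) (Set.range fun i => aeval x (c i)) := by
  intro t ht
  rw [SetLike.mem_coe, Algebra.adjoin_range_eq_range_aeval] at ht
  obtain ⟨p, rfl⟩ := (AlgHom.mem_range _).mp ht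
  have hcoord : ∀ i, (B.repr (aeval x p) i : Q) ∈
      (Algebra.adjoin L {map (algebraMap K L) g}).map (aeval x) := by
    rw [← Algebra.adjoin_image, Set.image_singleton, aeval_map_algebraMap]
    exact fun i => (B.repr (aeval x p) i).2
  choose y hy hyx using fun i => Subalgebra.mem_map.mp (hcoord i)
  have hlift : aeval x (∑ i, y i * map (algebraMap K L) (c i)) = aeval x p := by
    conv_rhs => rw [← B.sum_repr (aeval x p)]
    simp only [map_sum, map_mul, aeval_map_algebraMap, hyx, hB, Subalgebra.smul_def, smul_eq_mul]
  rw [← aeval_coeffwise_eq hker hπ hlift, map_sum (coeffwise π), map_sum]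
  refine Submodule.sum_mem _ fun i _ => ?_
  have hyK : aeval x (coeffwise π (y i)) ∈ Algebra.adjoin K {aeval x g} := by
    rw [← Set.image_singleton, Algebra.adjoin_image]
    exact Subalgebra.mem_map.mpr ⟨_, coeffwise_mem_adjoin_singleton π (hy i), rfl⟩
  rw [coeffwise_mul_map, map_mul]
  exact Submodule.smul_mem _ (⟨_, hyK⟩ : Algebra.adjoin K {aeval x g})
    (Submodule.subset_span ⟨i, rfl⟩)

end DescentRing

theorem span_aeval_eq_adjoin_range {σ ι K L Q : Type*} [Field K] [CommRing L] [Nontrivial L]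
    [Algebra K L] [CommRing Q] [Algebra K Q] [Algebra L Q] [IsScalarTower K L Q] [Fintype ι]
    {x : σ → Q} {J : Ideal (MvPolynomial σ K)}
    (hker : RingHom.ker (aeval x : MvPolynomial σ L →ₐ[L] Q) = J.map (map (algebraMap K L)))
    (g : MvPolynomial σ K) (c : ι → MvPolynomial σ K)
    (B : Module.Basis ι (Algebra.adjoin L {aeval x g}) Q) (hB : ∀ i, B i = aeval x (c i)) :
    (Submodule.span (Algebra.adjoin K {aeval x g}) (Set.range fun i => aeval x (c i)) : Set Q) =
      Algebra.adjoin K (Set.range x) := by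
  obtain ⟨π, hπ⟩ := (Algebra.linearMap K L).exists_leftInverse_of_injective
    (LinearMap.ker_eq_bot.mpr (algebraMap K L).injective)
  exact (span_aeval_subset_adjoin_range g c).antisymm
    (adjoin_range_subset_span_aeval hker (LinearMap.congr_fun hπ) g c B hB)

end MvPolynomial

theorem stmt_11_general (n : ℕ) (I : Ideal (MvPolynomial (Fin n) ℂ))
    (k₀ k : Subfield ℂ) (hk : k₀ ≤ k)
    (hdef : I = Ideal.span
      {p : MvPolynomial (Fin n) ℂ | p ∈ I ∧ ∀ mo, coeff mo p ∈ k₀})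
    (g : MvPolynomial (Fin n) ℤ) (d : ℕ)
    (hbasis : ∃ (c : Fin d → MvPolynomial (Fin n) ℤ)
        (B : Module.Basis (Fin d)
          (Algebra.adjoin ℂ
            ({Ideal.Quotient.mk I (MvPolynomial.map (Int.castRingHom ℂ) g)} :
              Set (MvPolynomial (Fin n) ℂ ⧸ I)))
          (MvPolynomial (Fin n) ℂ ⧸ I)),
        ∀ i, B i = Ideal.Quotient.mk I
          (MvPolynomial.map (Int.castRingHom ℂ) (c i))) :
    letI : Algebra k (MvPolynomial (Fin n) ℂ ⧸ I) :=
      ((algebraMap ℂ (MvPolynomial (Fin n) ℂ ⧸ I)).comp k.subtype).toAlgebra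
    ∃ b : Fin d → (MvPolynomial (Fin n) ℂ ⧸ I),
      (∀ i, b i ∈ Algebra.adjoin k
        (Set.range fun j : Fin n => Ideal.Quotient.mk I (X j))) ∧
      LinearIndependent
        (Algebra.adjoin k
          ({Ideal.Quotient.mk I (MvPolynomial.map (Int.castRingHom ℂ) g)} :
            Set (MvPolynomial (Fin n) ℂ ⧸ I))) b ∧
      (Submodule.span
        (Algebra.adjoin k
          ({Ideal.Quotient.mk I (MvPolynomial.map (Int.castRingHom ℂ) g)} :
            Set (MvPolynomial (Fin n) ℂ ⧸ I)))
        (Set.range b) : Set (MvPolynomial (Fin n) ℂ ⧸ I)) =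
      (Algebra.adjoin k
        (Set.range fun j : Fin n => Ideal.Quotient.mk I (X j)) :
          Set (MvPolynomial (Fin n) ℂ ⧸ I)) := by
  -- restated so that instance search prefers it to `Ideal.Quotient.algebra k`
  let : Algebra k (MvPolynomial (Fin n) ℂ ⧸ I) :=
    ((algebraMap ℂ (MvPolynomial (Fin n) ℂ ⧸ I)).comp k.subtype).toAlgebra
  have := IsScalarTower.of_algebraMap_eq (R := k) (S := ℂ) (A := MvPolynomial (Fin n) ℂ ⧸ I)
    fun _ => rfl
  set x : Fin n → MvPolynomial (Fin n) ℂ ⧸ I := fun j => Ideal.Quotient.mk I (X j)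
  have hx : (aeval x : MvPolynomial (Fin n) ℂ →ₐ[ℂ] _) = Ideal.Quotient.mkₐ ℂ I :=
    algHom_ext fun j => aeval_X x j
  have hint (p : MvPolynomial (Fin n) ℤ) :
      aeval x (map (Int.castRingHom k) p) = Ideal.Quotient.mk I (map (Int.castRingHom ℂ) p) := by
    rw [← aeval_map_algebraMap ℂ, map_map,
      RingHom.ext_int ((algebraMap k ℂ).comp (Int.castRingHom k)) (Int.castRingHom ℂ), hx]
    rfl
  have hker : RingHom.ker (aeval x : MvPolynomial (Fin n) ℂ →ₐ[ℂ] _) =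
      (I.comap (map (algebraMap k ℂ))).map (map (algebraMap k ℂ)) := by
    rw [hx]
    exact (Ideal.Quotient.mkₐ_ker ℂ I).trans (eq_map_comap_of_eq_span hk hdef)
  rw [← hint g] at hbasis ⊢
  obtain ⟨c, B, hB⟩ := hbasis
  simp only [← hint] at hB
  refine ⟨fun i => aeval x (map (Int.castRingHom k) (c i)), fun i => ?_,
    linearIndependent_aeval _ _ B hB, span_aeval_eq_adjoin_range hker _ _ B hB⟩
  rw [Algebra.adjoin_range_eq_range_aeval]
  exact ⟨_, rfl⟩

/-- Let `X ⊆ ℂⁿ` be an irreducible affine variety (vanishing ideal `I`,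
coordinate ring `ℂ[X] = ℂ[z]/I`) defined over a subfield `k₀` of ℂ which is its
minimal field of definition, let `k` be a subfield of ℂ containing `k₀`, and let
`f ∈ ℂ[X]` be the image of a polynomial with integer coefficients such that `ℂ[X]`
is a free `ℂ[f]`-module of rank `d` with a basis contained in the image of
`ℤ[z₁,…,z_n]`.  Then `T_k(X)`, the `k`-subalgebra of `ℂ[X]` generated by the images
of the coordinate functions, is a free `k[f]`-module of rank `d`: it admits a basis
`b` of `d` elements, i.e. a `k[f]`-linearly independent family whose `k[f]`-span is
exactly `T_k(X)`. -/
theorem stmt_11 (n : ℕ) (I : Ideal (MvPolynomial (Fin n) ℂ)) (hI : I.IsPrime)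
    (k₀ k : Subfield ℂ) (hk : k₀ ≤ k)
    (hdef : I = Ideal.span
      {p : MvPolynomial (Fin n) ℂ | p ∈ I ∧ ∀ mo, coeff mo p ∈ k₀})
    (hmin : ∀ k' : Subfield ℂ,
      I = Ideal.span {p : MvPolynomial (Fin n) ℂ | p ∈ I ∧ ∀ mo, coeff mo p ∈ k'} →
        k₀ ≤ k')
    (g : MvPolynomial (Fin n) ℤ) (d : ℕ)
    (hbasis : ∃ (c : Fin d → MvPolynomial (Fin n) ℤ)
        (B : Module.Basis (Fin d)
          (Algebra.adjoin ℂ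
            ({Ideal.Quotient.mk I (MvPolynomial.map (Int.castRingHom ℂ) g)} :
              Set (MvPolynomial (Fin n) ℂ ⧸ I)))
          (MvPolynomial (Fin n) ℂ ⧸ I)),
        ∀ i, B i = Ideal.Quotient.mk I
          (MvPolynomial.map (Int.castRingHom ℂ) (c i))) :
    letI : Algebra k (MvPolynomial (Fin n) ℂ ⧸ I) :=
      ((algebraMap ℂ (MvPolynomial (Fin n) ℂ ⧸ I)).comp k.subtype).toAlgebra
    ∃ b : Fin d → (MvPolynomial (Fin n) ℂ ⧸ I),
      (∀ i, b i ∈ Algebra.adjoin k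
        (Set.range fun j : Fin n => Ideal.Quotient.mk I (X j))) ∧
      LinearIndependent
        (Algebra.adjoin k
          ({Ideal.Quotient.mk I (MvPolynomial.map (Int.castRingHom ℂ) g)} :
            Set (MvPolynomial (Fin n) ℂ ⧸ I))) b ∧
      (Submodule.span
        (Algebra.adjoin k
          ({Ideal.Quotient.mk I (MvPolynomial.map (Int.castRingHom ℂ) g)} :
            Set (MvPolynomial (Fin n) ℂ ⧸ I)))
        (Set.range b) : Set (MvPolynomial (Fin n) ℂ ⧸ I)) =
      (Algebra.adjoin k
        (Set.range fun j : Fin n => Ideal.Quotient.mk I (X j)) :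
          Set (MvPolynomial (Fin n) ℂ ⧸ I)) :=
  stmt_11_general n I k₀ k hk hdef g d hbasis
end

section
/- Let X be an irreducible affine curve in ℂⁿ, f ∈ ℂ[X] a finite regular function, and p ∈ ℂ[X] with minimal polynomial m(t) over ℂ(f) of degree e, having coefficients in ℂ[f]. Then the Zariski closure of the image of the regular map (f, p) : X → ℂ² is the irreducible plane curve cut out by the unique irreducible polynomial q(s,t) ∈ ℂ[s,t], monic of degree e in t, satisfying q(f, t) = m(t). -/
/-!
Let `F`, `x` be the images of `f`, `p` in the function field `K` of `X`. As `f` is nonconstant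
and `ℂ` is algebraically closed, `F` is transcendental, so `ℂ[s] → ℂ(F)`, `s ↦ F`, is injective;
finiteness of `ℂ[X]` over `ℂ[f]` makes `x` integral over `ℂ(F)`. Since the minimal polynomial
`m` of `x` has coefficients in `ℂ[F]`, it lifts to a monic `q ∈ ℂ[s][t]`, which is unique and
irreducible because `m` is. For monic `q`, divisibility by `q` can be tested after mapping to
`ℂ(F)[t]`, where it becomes divisibility by `m`; hence the kernel of `ℂ[s,t] → K`,
`(s,t) ↦ (F,x)`, is `(q)`. That kernel is the vanishing ideal of the image of `(f,p)`, so the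
Zariski closure of the image is `V(q)`.
-/

section

open Polynomial IntermediateField

theorem IsAlgClosed.mem_range_algebraMap_of_isIntegral {k A : Type*} [Field k] [IsAlgClosed k]
    [CommRing A] [IsDomain A] [Algebra k A] {x : A} (hx : IsIntegral k x) :
    x ∈ Set.range (algebraMap k A) := by
  have : Algebra.IsIntegral k (Algebra.adjoin k {x}) :=
    Algebra.IsIntegral.adjoin (by simpa using hx)
  obtain ⟨c, hc⟩ := (IsAlgClosed.algebraMap_bijective_of_isIntegral (k := k)).2
    (⟨x, Algebra.self_mem_adjoin_singleton k x⟩ : Algebra.adjoin k {x})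
  exact ⟨c, congr_arg Subtype.val hc⟩

theorem IsAlgClosed.transcendental_of_notMem_range_algebraMap {k A : Type*} [Field k]
    [IsAlgClosed k] [CommRing A] [IsDomain A] [Algebra k A] {x : A}
    (hx : x ∉ Set.range (algebraMap k A)) : Transcendental k x :=
  fun halg ↦ hx (mem_range_algebraMap_of_isIntegral halg.isIntegral)

theorem IntermediateField.injective_aeval_adjoinSimple_gen {k K : Type*} [Field k] [Field K]
    [Algebra k K] {F : K} (hF : Transcendental k F) :
    Function.Injective (aeval (R := k) (AdjoinSimple.gen k F)) :=
  transcendental_iff_injective.1 <| (transcendental_algebraMap_iff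
    (a := AdjoinSimple.gen k F) (algebraMap k⟮F⟯ K).injective).1 hF

theorem IsIntegral.algebraMap_adjoin_simple {k A K : Type*} [Field k] [CommRing A] [Algebra k A]
    [Field K] [Algebra k K] [Algebra A K] [IsScalarTower k A K] {f a : A}
    (ha : IsIntegral (Algebra.adjoin k {f}) a) :
    IsIntegral k⟮algebraMap A K f⟯ (algebraMap A K a) := by
  have hle : Algebra.adjoin k {f} ≤
      k⟮algebraMap A K f⟯.toSubalgebra.comap (IsScalarTower.toAlgHom k A K) :=
    Algebra.adjoin_le (by simpa using mem_adjoin_simple_self k (algebraMap A K f))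
  exact ha.map_of_comp_eq
    (((algebraMap A K).comp (Algebra.adjoin k {f}).val.toRingHom).codRestrict
      k⟮algebraMap A K f⟯ fun y ↦ hle y.2) (algebraMap A K) rfl

theorem Polynomial.dvd_iff_aeval_map_eq_zero {R L K : Type*} [CommRing R] [Field L] [Ring K]
    [Algebra L K] {φ : R →+* L} (hφ : Function.Injective φ) {x : K} {q : R[X]} (hq : q.Monic)
    (hqx : q.map φ = minpoly L x) (w : R[X]) : q ∣ w ↔ aeval x (w.map φ) = 0 := by
  rw [← map_dvd_map φ hφ hq, hqx, minpoly.dvd_iff]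

theorem Polynomial.aevalAeval_algebraMap {R L K : Type*} [CommSemiring R] [CommSemiring L]
    [CommSemiring K] [Algebra R L] [Algebra L K] [Algebra R K] [IsScalarTower R L K]
    (y : L) (x : K) (w : R[X][X]) :
    aevalAeval (algebraMap L K y) x w = aeval x (w.map (aeval y).toRingHom) := by
  have h : aevalAeval (R := R) (algebraMap L K y) x =
      ((aeval x).restrictScalars R).comp (mapAlgHom (aeval y)) := by
    ext <;> simp
  simpa using congr($h w)

theorem exists_monic_irreducible_map_eq_minpoly {k K : Type*} [Field k] [Field K] [Algebra k K]
    {F x : K} (hF : Transcendental k F) (hx : IsIntegral k⟮F⟯ x)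
    (hcoeff : ∀ j, ((minpoly k⟮F⟯ x).coeff j : K) ∈ Algebra.adjoin k {F}) :
    ∃ q : k[X][X], q.Monic ∧ Irreducible q ∧
      q.map (aeval (AdjoinSimple.gen k F)).toRingHom = minpoly k⟮F⟯ x ∧
      ∀ w, aevalAeval F x w = 0 ↔ q ∣ w := by
  set φ := (aeval (R := k) (AdjoinSimple.gen k F)).toRingHom
  have hφ : Function.Injective φ := injective_aeval_adjoinSimple_gen hF
  have hlift : minpoly k⟮F⟯ x ∈ lifts φ := by
    refine lifts_iff_coeff_lifts _ |>.2 fun j ↦ ?_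
    obtain ⟨w, hw⟩ := (Algebra.adjoin_singleton_eq_range_aeval k F ▸ hcoeff j :)
    exact ⟨w, Subtype.ext <| (aeval_algHom_apply k⟮F⟯.val _ w).symm.trans hw⟩
  obtain ⟨q, hq_map, -, hq_monic⟩ := lifts_and_degree_eq_and_monic hlift (minpoly.monic hx)
  refine ⟨q, hq_monic, hq_monic.irreducible_of_irreducible_map φ q
    (hq_map ▸ minpoly.irreducible hx), hq_map, fun w ↦ ?_⟩
  have h := aevalAeval_algebraMap (R := k) (AdjoinSimple.gen k F) x w
  rw [AdjoinSimple.algebraMap_gen] at h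
  rw [dvd_iff_aeval_map_eq_zero hφ hq_monic hq_map, h]

theorem Polynomial.Bivariate.aeval_equivMvPolynomial {R B : Type*} [CommSemiring R]
    [CommSemiring B] [Algebra R B] (v : Fin 2 → B) (w : R[X][X]) :
    MvPolynomial.aeval v (equivMvPolynomial R w) = aevalAeval (v 0) (v 1) w := by
  have h : (MvPolynomial.aeval v).comp (equivMvPolynomial R).toAlgHom =
      aevalAeval (v 0) (v 1) := by
    ext <;> simp
  exact congr($h w)

end

theorem Ideal.eq_span_singleton_of_surjective {R S F : Type*} [CommSemiring R] [CommSemiring S]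
    [FunLike F R S] [RingHomClass F R S] {f : F} (hf : Function.Surjective f) {I : Ideal S}
    {q : R} (h : ∀ w, f w ∈ I ↔ q ∣ w) : I = Ideal.span {f q} := by
  have hcomap : I.comap f = Ideal.span {q} :=
    Ideal.ext fun w ↦ (h w).trans Ideal.mem_span_singleton.symm
  rw [← Ideal.map_comap_of_surjective f hf I, hcomap, Ideal.map_span, Set.image_singleton]

namespace MvPolynomial

variable {k σ τ : Type*} [Field k]

theorem mem_vanishingIdeal_image_iff {Y : Set (σ → k)} {K : Type*} [CommRing K] [Algebra k K]
    [Algebra (MvPolynomial σ k ⧸ vanishingIdeal k Y) K]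
    [IsScalarTower k (MvPolynomial σ k ⧸ vanishingIdeal k Y) K]
    (hinj : Function.Injective (algebraMap (MvPolynomial σ k ⧸ vanishingIdeal k Y) K))
    (G : τ → MvPolynomial σ k) (r : MvPolynomial τ k) :
    r ∈ vanishingIdeal k ((fun x i ↦ eval x (G i)) '' Y) ↔
      aeval (fun i ↦ algebraMap _ K (Ideal.Quotient.mk (vanishingIdeal k Y) (G i))) r = 0 := by
  have h : aeval (fun i ↦ algebraMap _ K (Ideal.Quotient.mk (vanishingIdeal k Y) (G i))) r =
      algebraMap _ K (Ideal.Quotient.mk _ (aeval G r)) :=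
    (comp_aeval_apply G ((IsScalarTower.toAlgHom k _ K).comp (Ideal.Quotient.mkₐ k _)) r).symm
  rw [h, map_eq_zero_iff _ hinj, Ideal.Quotient.eq_zero_iff_mem]
  simp only [mem_vanishingIdeal_iff, Set.forall_mem_image, comp_aeval_apply, aeval_eq_eval]

end MvPolynomial

open MvPolynomial

theorem stmt_17_general (n : ℕ) (X : Set (Fin n → ℂ))
    [hI : (vanishingIdeal ℂ X).IsPrime]
    (g P : MvPolynomial (Fin n) ℂ)
    (hnc : Ideal.Quotient.mk (vanishingIdeal ℂ X) g ∉
      Set.range (algebraMap ℂ (MvPolynomial (Fin n) ℂ ⧸ vanishingIdeal ℂ X)))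
    (hfin : Module.Finite
      (Algebra.adjoin ℂ
        ({Ideal.Quotient.mk (vanishingIdeal ℂ X) g} :
          Set (MvPolynomial (Fin n) ℂ ⧸ vanishingIdeal ℂ X)))
      (MvPolynomial (Fin n) ℂ ⧸ vanishingIdeal ℂ X))
    (e : ℕ)
    (he : e = (minpoly
      (IntermediateField.adjoin ℂ
        ({algebraMap (MvPolynomial (Fin n) ℂ ⧸ vanishingIdeal ℂ X)
            (FractionRing (MvPolynomial (Fin n) ℂ ⧸ vanishingIdeal ℂ X))
            (Ideal.Quotient.mk (vanishingIdeal ℂ X) g)} :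
          Set (FractionRing (MvPolynomial (Fin n) ℂ ⧸ vanishingIdeal ℂ X))))
      (algebraMap (MvPolynomial (Fin n) ℂ ⧸ vanishingIdeal ℂ X)
        (FractionRing (MvPolynomial (Fin n) ℂ ⧸ vanishingIdeal ℂ X))
        (Ideal.Quotient.mk (vanishingIdeal ℂ X) P))).natDegree)
    (hcoeff : ∀ j : ℕ,
      ((minpoly
        (IntermediateField.adjoin ℂ
          ({algebraMap (MvPolynomial (Fin n) ℂ ⧸ vanishingIdeal ℂ X)
              (FractionRing (MvPolynomial (Fin n) ℂ ⧸ vanishingIdeal ℂ X))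
              (Ideal.Quotient.mk (vanishingIdeal ℂ X) g)} :
            Set (FractionRing (MvPolynomial (Fin n) ℂ ⧸ vanishingIdeal ℂ X))))
        (algebraMap (MvPolynomial (Fin n) ℂ ⧸ vanishingIdeal ℂ X)
          (FractionRing (MvPolynomial (Fin n) ℂ ⧸ vanishingIdeal ℂ X))
          (Ideal.Quotient.mk (vanishingIdeal ℂ X) P))).coeff j :
        FractionRing (MvPolynomial (Fin n) ℂ ⧸ vanishingIdeal ℂ X)) ∈
      Algebra.adjoin ℂ
        ({algebraMap (MvPolynomial (Fin n) ℂ ⧸ vanishingIdeal ℂ X)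
            (FractionRing (MvPolynomial (Fin n) ℂ ⧸ vanishingIdeal ℂ X))
            (Ideal.Quotient.mk (vanishingIdeal ℂ X) g)} :
          Set (FractionRing (MvPolynomial (Fin n) ℂ ⧸ vanishingIdeal ℂ X)))) :
    ∃! q : Polynomial (Polynomial ℂ),
      Irreducible q ∧ q.Monic ∧ q.natDegree = e ∧
      Polynomial.map
        (Polynomial.aeval
          (⟨algebraMap (MvPolynomial (Fin n) ℂ ⧸ vanishingIdeal ℂ X)
              (FractionRing (MvPolynomial (Fin n) ℂ ⧸ vanishingIdeal ℂ X))
              (Ideal.Quotient.mk (vanishingIdeal ℂ X) g),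
            IntermediateField.subset_adjoin ℂ _ (Set.mem_singleton _)⟩ :
            IntermediateField.adjoin ℂ
              ({algebraMap (MvPolynomial (Fin n) ℂ ⧸ vanishingIdeal ℂ X)
                  (FractionRing (MvPolynomial (Fin n) ℂ ⧸ vanishingIdeal ℂ X))
                  (Ideal.Quotient.mk (vanishingIdeal ℂ X) g)} :
                Set (FractionRing (MvPolynomial (Fin n) ℂ ⧸ vanishingIdeal ℂ X))))).toRingHom
        q =
      minpoly
        (IntermediateField.adjoin ℂ
          ({algebraMap (MvPolynomial (Fin n) ℂ ⧸ vanishingIdeal ℂ X)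
              (FractionRing (MvPolynomial (Fin n) ℂ ⧸ vanishingIdeal ℂ X))
              (Ideal.Quotient.mk (vanishingIdeal ℂ X) g)} :
            Set (FractionRing (MvPolynomial (Fin n) ℂ ⧸ vanishingIdeal ℂ X))))
        (algebraMap (MvPolynomial (Fin n) ℂ ⧸ vanishingIdeal ℂ X)
          (FractionRing (MvPolynomial (Fin n) ℂ ⧸ vanishingIdeal ℂ X))
          (Ideal.Quotient.mk (vanishingIdeal ℂ X) P)) ∧
      zeroLocus ℂ (vanishingIdeal ℂ
          ((fun x : Fin n → ℂ => ![eval x g, eval x P]) '' X)) =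
        {v : Fin 2 → ℂ |
          Polynomial.eval₂ (Polynomial.evalRingHom (v 0)) (v 1) q = 0} := by
  open Polynomial Polynomial.Bivariate in
  set A := MvPolynomial (Fin n) ℂ ⧸ vanishingIdeal ℂ X
  set K := FractionRing A
  have hinj : Function.Injective (algebraMap A K) := IsFractionRing.injective A K
  have hF : Transcendental ℂ (algebraMap A K (Ideal.Quotient.mk _ g)) :=
    (transcendental_algebraMap_iff hinj).2
      (IsAlgClosed.transcendental_of_notMem_range_algebraMap hnc)
  have hφ := IntermediateField.injective_aeval_adjoinSimple_gen hF
  have hx := (Algebra.IsIntegral.of_finite (Algebra.adjoin ℂ {Ideal.Quotient.mk _ g}) A)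
    |>.isIntegral (Ideal.Quotient.mk _ P) |>.algebraMap_adjoin_simple (K := K)
  obtain ⟨q, hq_monic, hq_irr, hq_map, hq_ker⟩ :=
    exists_monic_irreducible_map_eq_minpoly hF hx hcoeff
  have himage : (fun x : Fin n → ℂ ↦ ![eval x g, eval x P]) = fun x i ↦ eval x (![g, P] i) := by
    funext x i; fin_cases i <;> rfl
  have hJ : vanishingIdeal ℂ ((fun x : Fin n → ℂ ↦ ![eval x g, eval x P]) '' X) =
      Ideal.span {equivMvPolynomial ℂ q} := by
    refine Ideal.eq_span_singleton_of_surjective (equivMvPolynomial ℂ).surjective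
      fun w ↦ ?_
    rw [himage, mem_vanishingIdeal_image_iff hinj, aeval_equivMvPolynomial]
    exact hq_ker w
  refine ⟨q, ⟨hq_irr, hq_monic, ?_, hq_map, ?_⟩, ?_⟩
  · rw [he, ← hq_map, natDegree_map_eq_of_injective hφ]
  · ext v
    rw [hJ, zeroLocus_span]
    simp only [Set.mem_ofPred_eq, Set.mem_singleton_iff, forall_eq]
    rw [aeval_equivMvPolynomial, coe_aevalAeval_eq_evalEval, eval₂_evalRingHom]
  · rintro q' ⟨-, -, -, hq'_map, -⟩
    exact map_injective _ hφ (hq'_map.trans hq_map.symm)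

/-- Let `X` be an irreducible affine curve in ℂⁿ, `f ∈ ℂ[X]` a finite
regular function (the class of the polynomial `g`), and `p ∈ ℂ[X]` (the class of the
polynomial `P`) with minimal polynomial `m(t)` over `ℂ(f)` of degree `e`, having
coefficients in `ℂ[f]`.  Then the Zariski closure of the image of the regular map
`(f, p) : X → ℂ²` is the plane curve cut out by the unique irreducible polynomial
`q(s,t) ∈ ℂ[s][t]`, monic of degree `e` in `t`, satisfying `q(f, t) = m(t)`. -/
theorem stmt_17 (n : ℕ) (X : Set (Fin n → ℂ))
    [hI : (vanishingIdeal ℂ X).IsPrime]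
    (hcl : zeroLocus ℂ (vanishingIdeal ℂ X) = X)
    (hcurve : ringKrullDim (MvPolynomial (Fin n) ℂ ⧸ vanishingIdeal ℂ X) = 1)
    (g P : MvPolynomial (Fin n) ℂ)
    (hnc : Ideal.Quotient.mk (vanishingIdeal ℂ X) g ∉
      Set.range (algebraMap ℂ (MvPolynomial (Fin n) ℂ ⧸ vanishingIdeal ℂ X)))
    (hfin : Module.Finite
      (Algebra.adjoin ℂ
        ({Ideal.Quotient.mk (vanishingIdeal ℂ X) g} :
          Set (MvPolynomial (Fin n) ℂ ⧸ vanishingIdeal ℂ X)))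
      (MvPolynomial (Fin n) ℂ ⧸ vanishingIdeal ℂ X))
    (e : ℕ)
    (he : e = (minpoly
      (IntermediateField.adjoin ℂ
        ({algebraMap (MvPolynomial (Fin n) ℂ ⧸ vanishingIdeal ℂ X)
            (FractionRing (MvPolynomial (Fin n) ℂ ⧸ vanishingIdeal ℂ X))
            (Ideal.Quotient.mk (vanishingIdeal ℂ X) g)} :
          Set (FractionRing (MvPolynomial (Fin n) ℂ ⧸ vanishingIdeal ℂ X))))
      (algebraMap (MvPolynomial (Fin n) ℂ ⧸ vanishingIdeal ℂ X)
        (FractionRing (MvPolynomial (Fin n) ℂ ⧸ vanishingIdeal ℂ X))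
        (Ideal.Quotient.mk (vanishingIdeal ℂ X) P))).natDegree)
    (hcoeff : ∀ j : ℕ,
      ((minpoly
        (IntermediateField.adjoin ℂ
          ({algebraMap (MvPolynomial (Fin n) ℂ ⧸ vanishingIdeal ℂ X)
              (FractionRing (MvPolynomial (Fin n) ℂ ⧸ vanishingIdeal ℂ X))
              (Ideal.Quotient.mk (vanishingIdeal ℂ X) g)} :
            Set (FractionRing (MvPolynomial (Fin n) ℂ ⧸ vanishingIdeal ℂ X))))
        (algebraMap (MvPolynomial (Fin n) ℂ ⧸ vanishingIdeal ℂ X)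
          (FractionRing (MvPolynomial (Fin n) ℂ ⧸ vanishingIdeal ℂ X))
          (Ideal.Quotient.mk (vanishingIdeal ℂ X) P))).coeff j :
        FractionRing (MvPolynomial (Fin n) ℂ ⧸ vanishingIdeal ℂ X)) ∈
      Algebra.adjoin ℂ
        ({algebraMap (MvPolynomial (Fin n) ℂ ⧸ vanishingIdeal ℂ X)
            (FractionRing (MvPolynomial (Fin n) ℂ ⧸ vanishingIdeal ℂ X))
            (Ideal.Quotient.mk (vanishingIdeal ℂ X) g)} :
          Set (FractionRing (MvPolynomial (Fin n) ℂ ⧸ vanishingIdeal ℂ X)))) :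
    ∃! q : Polynomial (Polynomial ℂ),
      Irreducible q ∧ q.Monic ∧ q.natDegree = e ∧
      Polynomial.map
        (Polynomial.aeval
          (⟨algebraMap (MvPolynomial (Fin n) ℂ ⧸ vanishingIdeal ℂ X)
              (FractionRing (MvPolynomial (Fin n) ℂ ⧸ vanishingIdeal ℂ X))
              (Ideal.Quotient.mk (vanishingIdeal ℂ X) g),
            IntermediateField.subset_adjoin ℂ _ (Set.mem_singleton _)⟩ :
            IntermediateField.adjoin ℂ
              ({algebraMap (MvPolynomial (Fin n) ℂ ⧸ vanishingIdeal ℂ X)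
                  (FractionRing (MvPolynomial (Fin n) ℂ ⧸ vanishingIdeal ℂ X))
                  (Ideal.Quotient.mk (vanishingIdeal ℂ X) g)} :
                Set (FractionRing (MvPolynomial (Fin n) ℂ ⧸ vanishingIdeal ℂ X))))).toRingHom
        q =
      minpoly
        (IntermediateField.adjoin ℂ
          ({algebraMap (MvPolynomial (Fin n) ℂ ⧸ vanishingIdeal ℂ X)
              (FractionRing (MvPolynomial (Fin n) ℂ ⧸ vanishingIdeal ℂ X))
              (Ideal.Quotient.mk (vanishingIdeal ℂ X) g)} :
            Set (FractionRing (MvPolynomial (Fin n) ℂ ⧸ vanishingIdeal ℂ X))))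
        (algebraMap (MvPolynomial (Fin n) ℂ ⧸ vanishingIdeal ℂ X)
          (FractionRing (MvPolynomial (Fin n) ℂ ⧸ vanishingIdeal ℂ X))
          (Ideal.Quotient.mk (vanishingIdeal ℂ X) P)) ∧
      zeroLocus ℂ (vanishingIdeal ℂ
          ((fun x : Fin n → ℂ => ![eval x g, eval x P]) '' X)) =
        {v : Fin 2 → ℂ |
          Polynomial.eval₂ (Polynomial.evalRingHom (v 0)) (v 1) q = 0} :=
  stmt_17_general n X (hI := hI) g P hnc hfin e he hcoeff
end

section
/- Let X₁, …, X_m be distinct irreducible affine curves in ℂⁿ, each equipped with a finite dominant regular function f_i to ℂ induced by a common polynomial g. Then there exists a polynomial p ∈ ℂ[z₁,…,z_n] such that for each i, the restriction p_i of p to X_i is a primitive element of ℂ(X_i) over ℂ(f_i), its minimal polynomial is monic of degree d_i with coefficients in ℂ[f_i], and the corresponding normalized irreducible polynomials q_i(s,t) ∈ ℂ[s,t] are pairwise distinct. -/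
/-!
Write `Rᵢ = ℂ[z] ⧸ I(Xᵢ)`, `Lᵢ` for its fraction field and `Kᵢ = ℂ(g) ⊆ Lᵢ`. As `Rᵢ` is finite
over `ℂ[g]` and `g` is transcendental, `Lᵢ / Kᵢ` is finite separable, so it has finitely many
intermediate fields; hence if `α, β, T` generate `Lᵢ` over `Kᵢ`, so do `α + cβ, T` for all but
finitely many `c ∈ ℂ`. Applied to the coordinates this gives a common primitive element `p₀`.

Each `Rᵢ` is integral over `ℂ[g]` and `g` is transcendental on every `Xⱼ`, so no `I(Xⱼ)` lies in
another; hence there are `hᵢ` vanishing on every `Xⱼ`, `j ≠ i`, but not on `Xᵢ`, and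
`p = p₀ + ∑ cⱼ hⱼ` restricts to `p₀ + cᵢ hᵢ` on `Xᵢ`. All but finitely many `cᵢ` keep this
primitive, and a given `q` arises from only finitely many `cᵢ` (each gives a root of `q(g, t)`), so
the `cᵢ` can be chosen with pairwise distinct `qᵢ`. Finally `ℂ[g]` is integrally closed with
fraction field `Kᵢ`, so the minimal polynomial of the integral element `pᵢ` has its coefficients
in `ℂ[g]`; this is `qᵢ(g, t)`.
-/

open Polynomial IntermediateField

theorem exists_injective_forall_mem_of_infinite {ι β : Type*} [Finite ι] (S : ι → Set β)
    (hS : ∀ i, (S i).Infinite) :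
    ∃ f : ι → β, Function.Injective f ∧ ∀ i, f i ∈ S i := by
  suffices ∀ (N : ℕ) (S : Fin N → Set β), (∀ i, (S i).Infinite) →
      ∃ f : Fin N → β, Function.Injective f ∧ ∀ i, f i ∈ S i by
    obtain ⟨N, ⟨e⟩⟩ := Finite.exists_equiv_fin ι
    obtain ⟨f, hf, hfS⟩ := this N (S ∘ e.symm) fun i => hS _
    exact ⟨f ∘ e, hf.comp e.injective, fun i => by simpa using hfS (e i)⟩
  intro N
  induction N with
  | zero => exact fun _ _ => ⟨Fin.elim0, fun i => i.elim0, fun i => i.elim0⟩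
  | succ N ih =>
    intro S hS
    obtain ⟨f, hf, hfS⟩ := ih (fun i => S i.succ) fun i => hS _
    obtain ⟨x, hxS, hxf⟩ := ((hS 0).sdiff (Set.finite_range f)).nonempty
    exact ⟨Fin.cons x f, Fin.cons_injective_iff.mpr ⟨hxf, hf⟩, Fin.cases hxS hfS⟩

theorem Set.Infinite.image_of_finite_fibers {α β : Type*} {s : Set α} {f : α → β}
    (hs : s.Infinite) (hf : ∀ b ∈ f '' s, (f ⁻¹' {b}).Finite) : (f '' s).Infinite :=
  fun h => hs ((h.preimage' hf).subset (Set.subset_preimage_image f s))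

theorem Polynomial.finite_setOf_eval_add_smul_eq_zero {k E : Type*} [Field k] [Field E]
    [Algebra k E] {p : E[X]} (hp : p ≠ 0) (α : E) {β : E} (hβ : β ≠ 0) :
    {c : k | p.eval (α + c • β) = 0}.Finite :=
  (p.finite_setOfPred_isRoot hp).preimage
    ((add_right_injective α).comp (smul_left_injective k hβ)).injOn

theorem IntermediateField.finite_setOf_adjoin_insert_add_smul_ne_top {k F E : Type*} [Field k]
    [Field F] [Field E] [Algebra k F] [Algebra k E] [Algebra F E] [IsScalarTower k F E]
    [Finite (IntermediateField F E)] {α β : E} {T : Set E}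
    (h : adjoin F (insert α (insert β T)) = ⊤) :
    {c : k | adjoin F (insert (α + c • β) T) ≠ ⊤}.Finite := by
  refine Set.Finite.of_finite_image (f := fun c : k => adjoin F (insert (α + c • β) T))
    (Set.toFinite _) fun c hc c' _ hcc' => ?_
  by_contra hne
  set M := adjoin F (insert (α + c • β) T)
  have hsmul : ∀ (a : k) {x : E}, x ∈ M → a • x ∈ M := fun a x hx => by
    rw [← algebraMap_smul F a x]; exact M.smul_mem hx
  have hc_mem : α + c • β ∈ M := subset_adjoin _ _ (Set.mem_insert _ _)
  have hc'_mem : α + c' • β ∈ M := by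
    rw [show M = _ from hcc']; exact subset_adjoin _ _ (Set.mem_insert _ _)
  -- two distinct members of the pencil `α + c • β` already recover `β`, hence `α`
  have hβ : β ∈ M := by
    have := hsmul (c - c')⁻¹ (M.sub_mem hc_mem hc'_mem)
    rwa [add_sub_add_left_eq_sub, ← sub_smul, smul_smul, inv_mul_cancel₀ (sub_ne_zero.mpr hne),
      one_smul] at this
  have hα : α ∈ M := by simpa using M.sub_mem hc_mem (hsmul c hβ)
  have hT : T ⊆ M := fun x hx => subset_adjoin _ _ (Set.mem_insert_of_mem _ hx)
  exact hc <| top_le_iff.mp <| h ▸ adjoin_le_iff.mpr <|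
    Set.insert_subset hα (Set.insert_subset hβ hT)

theorem exists_forall_adjoin_simple_eq_top {ι k S : Type*} [Finite ι] [Field k] [Infinite k]
    [CommRing S] [Algebra k S] {E : ι → Type*} [∀ i, Field (E i)] [∀ i, Algebra k (E i)]
    (F : ∀ i, IntermediateField k (E i)) [∀ i, Finite (IntermediateField (F i) (E i))]
    (φ : ∀ i, S →ₐ[k] E i) (T : Finset S) (hT : ∀ i, adjoin (F i) (φ i '' T) = ⊤) :
    ∃ s : S, ∀ i, (F i)⟮φ i s⟯ = ⊤ := by
  suffices ∀ a : S, (∀ i, adjoin (F i) (insert (φ i a) (φ i '' T)) = ⊤) →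
      ∃ s : S, ∀ i, (F i)⟮φ i s⟯ = ⊤ from
    this 0 fun i => top_le_iff.mp <| (hT i).ge.trans (adjoin.mono _ _ _ (Set.subset_insert _ _))
  classical
  clear hT
  induction T using Finset.induction_on with
  | empty => exact fun a ha => ⟨a, by simpa using ha⟩
  | insert b T _ ih =>
    intro a ha
    have hbad : (⋃ i, {c : k |
        adjoin (F i) (insert (φ i a + c • φ i b) (φ i '' T)) ≠ ⊤}).Finite :=
      Set.finite_iUnion fun i => finite_setOf_adjoin_insert_add_smul_ne_top <| by
        simpa only [Finset.coe_insert, Set.image_insert_eq] using ha i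
    obtain ⟨c, hc⟩ := hbad.infinite_compl.nonempty
    refine ih (a + c • b) fun i => ?_
    rw [map_add, map_smul]
    by_contra h
    exact hc (Set.mem_iUnion.mpr ⟨i, h⟩)

theorem exists_adjoin_add_smul_eq_top_and_injective {ι k β : Type*} [Finite ι] [Field k]
    [Infinite k] {E : ι → Type*} [∀ i, Field (E i)] [∀ i, Algebra k (E i)]
    (F : ∀ i, IntermediateField k (E i)) [∀ i, Finite (IntermediateField (F i) (E i))]
    {α γ : ∀ i, E i} (hα : ∀ i, (F i)⟮α i⟯ = ⊤) (Q : ∀ i, E i → β)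
    (hQ : ∀ i b, {c : k | Q i (α i + c • γ i) = b}.Finite) :
    ∃ c : ι → k, (∀ i, (F i)⟮α i + c i • γ i⟯ = ⊤) ∧
      Function.Injective fun i => Q i (α i + c i • γ i) := by
  have hgood : ∀ i, {c : k | (F i)⟮α i + c • γ i⟯ = ⊤}.Infinite := fun i => by
    have hαγ : adjoin (F i) (insert (α i) (insert (γ i) ∅)) = ⊤ :=
      top_le_iff.mp <| (hα i).ge.trans (adjoin.mono _ _ _ (by simp))
    simpa [Set.compl_ofPred] using
      (finite_setOf_adjoin_insert_add_smul_ne_top (k := k) hαγ).infinite_compl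
  obtain ⟨q, hq, hqS⟩ := exists_injective_forall_mem_of_infinite _ fun i =>
    (hgood i).image_of_finite_fibers fun b _ => hQ i b
  choose c hc hcq using hqS
  exact ⟨c, hc, by simpa only [hcq] using hq⟩

section MinpolyOverPolynomial

variable {k E : Type*} [Field k] [Field E] [Algebra k E] {f x : E}

theorem algebraMap_comp_aeval_gen (f : E) :
    (algebraMap k⟮f⟯ E).comp (aeval (R := k) (AdjoinSimple.gen k f)).toRingHom =
      (aeval (R := k) f).toRingHom :=
  RingHom.ext fun u => by simp [← aeval_algebraMap_apply]

theorem isIntegral_adjoin_simple_of_isIntegralElem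
    (hx : (aeval (R := k) f).toRingHom.IsIntegralElem x) : IsIntegral k⟮f⟯ x := by
  obtain ⟨P, hPm, hP⟩ := hx
  exact ⟨P.map _, hPm.map _, by rw [eval₂_map, algebraMap_comp_aeval_gen, hP]⟩

variable (k) in
/-- The paper's `q(s, t)`: the minimal polynomial of `x` over `k[s]`, where `s` acts on `E` as `f`
(junk value `0` when `x` is not integral over `k[f]`). -/
noncomputable def minpolyOverPolynomial (f x : E) : k[X][X] :=
  letI := (aeval (R := k) f).toRingHom.toAlgebra
  minpoly k[X] x

theorem minpolyOverPolynomial_monic (hx : (aeval (R := k) f).toRingHom.IsIntegralElem x) :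
    (minpolyOverPolynomial k f x).Monic :=
  letI := (aeval (R := k) f).toRingHom.toAlgebra
  minpoly.monic hx

theorem eval₂_minpolyOverPolynomial :
    eval₂ (aeval (R := k) f).toRingHom x (minpolyOverPolynomial k f x) = 0 :=
  letI := (aeval (R := k) f).toRingHom.toAlgebra
  (aeval_def x _).symm.trans (minpoly.aeval k[X] x)

theorem map_minpolyOverPolynomial (hf : Transcendental k f)
    (hx : (aeval (R := k) f).toRingHom.IsIntegralElem x) :
    (minpolyOverPolynomial k f x).map (aeval (R := k) (AdjoinSimple.gen k f)).toRingHom =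
      minpoly k⟮f⟯ x := by
  let := (aeval (R := k) f).toRingHom.toAlgebra
  let := (aeval (R := k) (AdjoinSimple.gen k f)).toRingHom.toAlgebra
  have : IsScalarTower k[X] k⟮f⟯ E :=
    IsScalarTower.of_algebraMap_eq' (algebraMap_comp_aeval_gen f).symm
  have hcoe : ∀ u, (algebraMap k[X] k⟮f⟯ u : E) = aeval f u :=
    RingHom.congr_fun (algebraMap_comp_aeval_gen f)
  have : FaithfulSMul k[X] k⟮f⟯ := (faithfulSMul_iff_algebraMap_injective _ _).mpr
    fun u v huv => transcendental_iff_injective.mp hf <| by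
      rw [← hcoe, ← hcoe, huv]
  have : IsFractionRing k[X] k⟮f⟯ := .of_field _ _ fun z => by
    obtain ⟨r, s, hrs⟩ := (mem_adjoin_simple_iff k _).mp z.2
    exact ⟨r, s, Subtype.ext (by rw [hrs, IntermediateField.coe_div, hcoe, hcoe])⟩
  exact (minpoly.isIntegrallyClosed_eq_field_fractions' k⟮f⟯ hx).symm

theorem irreducible_minpolyOverPolynomial (hf : Transcendental k f)
    (hx : (aeval (R := k) f).toRingHom.IsIntegralElem x) :
    Irreducible (minpolyOverPolynomial k f x) :=
  (minpolyOverPolynomial_monic hx).irreducible_of_irreducible_map _ _ <| by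
    rw [map_minpolyOverPolynomial hf hx]
    exact minpoly.irreducible (isIntegral_adjoin_simple_of_isIntegralElem hx)

theorem natDegree_minpolyOverPolynomial (hf : Transcendental k f)
    (hx : (aeval (R := k) f).toRingHom.IsIntegralElem x) :
    (minpolyOverPolynomial k f x).natDegree = (minpoly k⟮f⟯ x).natDegree := by
  rw [← map_minpolyOverPolynomial hf hx, (minpolyOverPolynomial_monic hx).natDegree_map]

theorem coeff_minpoly_adjoin_simple_mem (hf : Transcendental k f)
    (hx : (aeval (R := k) f).toRingHom.IsIntegralElem x) (j : ℕ) :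
    ((minpoly k⟮f⟯ x).coeff j : E) ∈ Algebra.adjoin k {f} := by
  rw [← map_minpolyOverPolynomial hf hx, coeff_map, Algebra.adjoin_singleton_eq_range_aeval]
  exact ⟨_, (RingHom.congr_fun (algebraMap_comp_aeval_gen f) _).symm⟩

theorem finite_setOf_minpolyOverPolynomial_add_smul_eq {α γ : E} (hγ : γ ≠ 0)
    (hx : ∀ c : k, (aeval (R := k) f).toRingHom.IsIntegralElem (α + c • γ)) (D : k[X][X]) :
    {c : k | minpolyOverPolynomial k f (α + c • γ) = D}.Finite := by
  by_cases hD : D.Monic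
  · refine (finite_setOf_eval_add_smul_eq_zero (hD.map (aeval (R := k) f).toRingHom).ne_zero
      α hγ).subset fun c hc => ?_
    rw [Set.mem_ofPred_eq, eval_map, ← hc]
    exact eval₂_minpolyOverPolynomial
  · exact Set.finite_empty.subset fun c hc => hD (hc ▸ minpolyOverPolynomial_monic (hx c))

end MinpolyOverPolynomial

theorem IntermediateField.eq_top_of_forall_algebraMap_mem {R F L : Type*} [CommRing R] [Field F]
    [Field L] [Algebra R L] [IsFractionRing R L] [Algebra F L] (M : IntermediateField F L)
    (h : ∀ r : R, algebraMap R L r ∈ M) : M = ⊤ :=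
  eq_top_iff.mpr fun x _ => by
    obtain ⟨a, b, -, rfl⟩ := IsFractionRing.div_surjective (A := R) x
    exact div_mem (h a) (h b)

section FunctionField

variable {k R : Type*} [Field k] [CommRing R] [Algebra k R]

theorem isIntegral_aeval_of_finite_adjoin (y : R) [Module.Finite (Algebra.adjoin k {y}) R] :
    (aeval (R := k) y).toRingHom.IsIntegral := by
  let σ : k[X] →ₐ[k] Algebra.adjoin k {y} :=
    (aeval y).codRestrict _ fun u => aeval_mem_adjoin_singleton k y
  have hσ : Function.Surjective σ := fun ⟨a, ha⟩ => by
    rw [Algebra.adjoin_singleton_eq_range_aeval] at ha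
    obtain ⟨u, rfl⟩ := ha
    exact ⟨u, rfl⟩
  exact RingHom.IsIntegral.trans σ.toRingHom _ (RingHom.isIntegral_of_surjective _ hσ)
    fun r => Algebra.IsIntegral.isIntegral r

theorem isIntegralElem_aeval_algebraMap (y : R) [Module.Finite (Algebra.adjoin k {y}) R]
    {L : Type*} [CommRing L] [Algebra R L] [Algebra k L] [IsScalarTower k R L] (r : R) :
    (aeval (R := k) (algebraMap R L y)).toRingHom.IsIntegralElem (algebraMap R L r) := by
  obtain ⟨P, hPm, hP⟩ := isIntegral_aeval_of_finite_adjoin (k := k) y r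
  have : (aeval (R := k) (algebraMap R L y)).toRingHom =
      (algebraMap R L).comp (aeval y).toRingHom :=
    RingHom.ext fun u => aeval_algebraMap_apply L y u
  exact ⟨P, hPm, by rw [this, ← hom_eval₂, hP, map_zero]⟩

variable [IsDomain R]

theorem transcendental_of_notMem_range [IsAlgClosed k] {y : R}
    (hy : y ∉ Set.range (algebraMap k R)) : Transcendental k y := by
  rw [← transcendental_algebraMap_iff (IsFractionRing.injective R (FractionRing R))]
  intro halg
  obtain ⟨a, ha⟩ := halg.isIntegral.mem_range_algebraMap_of_minpoly_splits (K := k)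
    (IsAlgClosed.splits_domain _)
  exact hy ⟨a, IsFractionRing.injective R (FractionRing R) <| by
    rw [← IsScalarTower.algebraMap_apply]; exact ha⟩

theorem algebraMap_mem_adjoin_simple_of_mem_adjoin {y a : R} (ha : a ∈ Algebra.adjoin k {y}) :
    algebraMap R (FractionRing R) a ∈ k⟮algebraMap R (FractionRing R) y⟯ :=
  algebra_adjoin_le_adjoin k _ <| by
    rw [← IsScalarTower.coe_toAlgHom' k R, ← AlgHom.map_adjoin_singleton]
    exact Subalgebra.mem_map.mpr ⟨a, ha, rfl⟩

variable (y : R) [Module.Finite (Algebra.adjoin k {y}) R]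

theorem finiteDimensional_adjoin_simple_algebraMap :
    FiniteDimensional k⟮algebraMap R (FractionRing R) y⟯ (FractionRing R) := by
  obtain ⟨s, hs⟩ := Module.finite_def.mp ‹Module.Finite (Algebra.adjoin k {y}) R›
  let M := adjoin k⟮algebraMap R (FractionRing R) y⟯ (algebraMap R (FractionRing R) '' s)
  have : FiniteDimensional k⟮algebraMap R (FractionRing R) y⟯ M :=
    finiteDimensional_adjoin fun _ ⟨r, _, hr⟩ =>
      hr ▸ isIntegral_adjoin_simple_of_isIntegralElem (isIntegralElem_aeval_algebraMap y r)
  have hM : M = ⊤ := eq_top_of_forall_algebraMap_mem M fun r => by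
    have hr : r ∈ Submodule.span (Algebra.adjoin k {y}) (s : Set R) := hs ▸ Submodule.mem_top
    induction hr using Submodule.span_induction with
    | mem x hx => exact subset_adjoin _ _ ⟨x, hx, rfl⟩
    | zero => simp
    | add x y _ _ hx hy => simpa using M.add_mem hx hy
    | smul a x _ hx =>
      rw [Algebra.smul_def, map_mul]
      exact M.mul_mem (M.algebraMap_mem ⟨_, algebraMap_mem_adjoin_simple_of_mem_adjoin a.2⟩) hx
  rw [hM] at this
  exact topEquiv.toLinearEquiv.finiteDimensional

theorem finite_intermediateField_adjoin_simple_algebraMap [CharZero k] :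
    Finite (IntermediateField k⟮algebraMap R (FractionRing R) y⟯ (FractionRing R)) := by
  have := finiteDimensional_adjoin_simple_algebraMap (k := k) y
  exact (Field.exists_primitive_element_iff_finite_intermediateField _ _).mp
    ⟨inferInstance, Field.exists_primitive_element _ _⟩

end FunctionField

section Quotients

variable {S : Type*} [CommRing S]

theorem Ideal.exists_notMem_and_mem_of_pairwise_not_le {ι : Type*} [Finite ι] (P : ι → Ideal S)
    [∀ i, (P i).IsPrime] (hP : Pairwise fun i j => ¬ P j ≤ P i) :
    ∃ e : ι → S, ∀ i, e i ∉ P i ∧ ∀ j ≠ i, e i ∈ P j := by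
  have := Fintype.ofFinite ι
  classical
  have hsep : ∀ i j, i ≠ j → ∃ a ∈ P j, a ∉ P i := fun i j hij =>
    SetLike.not_le_iff_exists.mp (hP hij)
  choose a haP haP' using hsep
  refine ⟨fun i => ∏ j ∈ Finset.univ.erase i, if h : i = j then 1 else a i j h,
    fun i => ⟨?_, fun j hji => ?_⟩⟩
  · rw [Ideal.IsPrime.prod_mem_iff]
    rintro ⟨j, hj, hmem⟩
    have hij : i ≠ j := (Finset.ne_of_mem_erase hj).symm
    rw [dif_neg hij] at hmem
    exact haP' i j hij hmem
  · refine Ideal.mem_of_dvd _ (Finset.dvd_prod_of_mem _ (Finset.mem_erase.mpr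
      ⟨hji, Finset.mem_univ j⟩)) ?_
    rw [dif_neg hji.symm]
    exact haP i j hji.symm

variable {k : Type*} [Field k] [Algebra k S]

theorem Ideal.eq_of_le_of_transcendental {I J : Ideal S} [I.IsPrime] (hIJ : I ≤ J) {y : S}
    (hI : (aeval (R := k) (Ideal.Quotient.mk I y)).toRingHom.IsIntegral)
    (hJ : Transcendental k (Ideal.Quotient.mk J y)) : I = J := by
  let := (aeval (R := k) (Ideal.Quotient.mk I y)).toRingHom.toAlgebra
  have : Algebra.IsIntegral k[X] (S ⧸ I) := ⟨hI⟩
  have hcomp : (Ideal.Quotient.factor hIJ).comp (algebraMap k[X] (S ⧸ I)) =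
      (aeval (R := k) (Ideal.Quotient.mk J y)).toRingHom :=
    RingHom.ext fun u =>
      (aeval_algHom_apply (Ideal.Quotient.factorₐ k hIJ) (Ideal.Quotient.mk I y) u).symm.trans
        (by simp)
  -- incomparability for the integral extension `k[X] → S ⧸ I`
  have hker : RingHom.ker (Ideal.Quotient.factor hIJ) = ⊥ :=
    Ideal.eq_bot_of_comap_eq_bot (R := k[X]) <| by
      rw [RingHom.comap_ker, hcomp, ← RingHom.injective_iff_ker_eq_bot]
      exact transcendental_iff_injective.mp hJ
  refine le_antisymm hIJ fun x hx => ?_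
  have : Ideal.Quotient.mk I x ∈ RingHom.ker (Ideal.Quotient.factor hIJ) := by
    simpa [Ideal.Quotient.eq_zero_iff_mem] using hx
  rwa [hker, Ideal.mem_bot, Ideal.Quotient.eq_zero_iff_mem] at this

variable (k) in
noncomputable def Ideal.toFractionRing (I : Ideal S) : S →ₐ[k] FractionRing (S ⧸ I) :=
  (IsScalarTower.toAlgHom k (S ⧸ I) _).comp (Ideal.Quotient.mkₐ k I)

theorem Ideal.toFractionRing_eq_zero_iff {I : Ideal S} [I.IsPrime] {a : S} :
    I.toFractionRing k a = 0 ↔ a ∈ I :=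
  (map_eq_zero_iff _ (IsFractionRing.injective (S ⧸ I) _)).trans
    (Ideal.Quotient.eq_zero_iff_mem (I := I))

theorem Ideal.adjoin_image_toFractionRing_eq_top (I : Ideal S) [I.IsPrime] {s : Set S}
    (hs : Algebra.adjoin k s = ⊤) (F : IntermediateField k (FractionRing (S ⧸ I))) :
    adjoin F (I.toFractionRing k '' s) = ⊤ :=
  eq_top_of_forall_algebraMap_mem _ fun r => by
    obtain ⟨a, rfl⟩ := Ideal.Quotient.mk_surjective (I := I) r
    have ha : I.toFractionRing k a ∈ Algebra.adjoin k (I.toFractionRing k '' s) := by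
      rw [← AlgHom.map_adjoin, hs]
      exact ⟨a, Algebra.mem_top, rfl⟩
    exact Algebra.adjoin_le (S := ((adjoin F _).restrictScalars k).toSubalgebra)
      (subset_adjoin F _) ha

end Quotients

open MvPolynomial

set_option maxHeartbeats 400000 in
theorem stmt_18_general (n m : ℕ) (X : Fin m → Set (Fin n → ℂ))
    (hcl : ∀ i, zeroLocus ℂ (vanishingIdeal ℂ (X i)) = X i)
    (hprime : ∀ i, (vanishingIdeal ℂ (X i)).IsPrime)
    (hdist : Function.Injective X)
    (g : MvPolynomial (Fin n) ℂ)
    (hnc : ∀ i, (Ideal.Quotient.mk (vanishingIdeal ℂ (X i)) g) ∉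
        Set.range (algebraMap ℂ (MvPolynomial (Fin n) ℂ ⧸ vanishingIdeal ℂ (X i))))
    (hfin : ∀ i, Module.Finite
        (Algebra.adjoin ℂ (({Ideal.Quotient.mk (vanishingIdeal ℂ (X i)) g}) : Set (MvPolynomial (Fin n) ℂ ⧸ vanishingIdeal ℂ (X i))))
        (MvPolynomial (Fin n) ℂ ⧸ vanishingIdeal ℂ (X i)))
    (d : Fin m → ℕ)
    (hd : ∀ i, haveI := hprime i;
      d i = Module.finrank
        (IntermediateField.adjoin ℂ
        (({algebraMap (MvPolynomial (Fin n) ℂ ⧸ vanishingIdeal ℂ (X i))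
          (FractionRing (MvPolynomial (Fin n) ℂ ⧸ vanishingIdeal ℂ (X i))) (Ideal.Quotient.mk (vanishingIdeal ℂ (X i)) g)}) : Set (FractionRing (MvPolynomial (Fin n) ℂ ⧸ vanishingIdeal ℂ (X i)))))
        (FractionRing (MvPolynomial (Fin n) ℂ ⧸ vanishingIdeal ℂ (X i)))) :
    ∃ (p : MvPolynomial (Fin n) ℂ) (q : Fin m → Polynomial (Polynomial ℂ)),
      Function.Injective q ∧
      ∀ i, haveI := hprime i;
        (IntermediateField.adjoin
            (IntermediateField.adjoin ℂ
        (({algebraMap (MvPolynomial (Fin n) ℂ ⧸ vanishingIdeal ℂ (X i))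
          (FractionRing (MvPolynomial (Fin n) ℂ ⧸ vanishingIdeal ℂ (X i))) (Ideal.Quotient.mk (vanishingIdeal ℂ (X i)) g)}) : Set (FractionRing (MvPolynomial (Fin n) ℂ ⧸ vanishingIdeal ℂ (X i)))))
            (({algebraMap (MvPolynomial (Fin n) ℂ ⧸ vanishingIdeal ℂ (X i))
          (FractionRing (MvPolynomial (Fin n) ℂ ⧸ vanishingIdeal ℂ (X i))) (Ideal.Quotient.mk (vanishingIdeal ℂ (X i)) p)}) : Set (FractionRing (MvPolynomial (Fin n) ℂ ⧸ vanishingIdeal ℂ (X i)))) = ⊤) ∧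
        (minpoly (IntermediateField.adjoin ℂ
        (({algebraMap (MvPolynomial (Fin n) ℂ ⧸ vanishingIdeal ℂ (X i))
          (FractionRing (MvPolynomial (Fin n) ℂ ⧸ vanishingIdeal ℂ (X i))) (Ideal.Quotient.mk (vanishingIdeal ℂ (X i)) g)}) : Set (FractionRing (MvPolynomial (Fin n) ℂ ⧸ vanishingIdeal ℂ (X i))))) (algebraMap (MvPolynomial (Fin n) ℂ ⧸ vanishingIdeal ℂ (X i))
          (FractionRing (MvPolynomial (Fin n) ℂ ⧸ vanishingIdeal ℂ (X i))) (Ideal.Quotient.mk (vanishingIdeal ℂ (X i)) p))).Monic ∧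
        (minpoly (IntermediateField.adjoin ℂ
        (({algebraMap (MvPolynomial (Fin n) ℂ ⧸ vanishingIdeal ℂ (X i))
          (FractionRing (MvPolynomial (Fin n) ℂ ⧸ vanishingIdeal ℂ (X i))) (Ideal.Quotient.mk (vanishingIdeal ℂ (X i)) g)}) : Set (FractionRing (MvPolynomial (Fin n) ℂ ⧸ vanishingIdeal ℂ (X i))))) (algebraMap (MvPolynomial (Fin n) ℂ ⧸ vanishingIdeal ℂ (X i))
          (FractionRing (MvPolynomial (Fin n) ℂ ⧸ vanishingIdeal ℂ (X i))) (Ideal.Quotient.mk (vanishingIdeal ℂ (X i)) p))).natDegree = d i ∧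
        (∀ j : ℕ,
          (((minpoly (IntermediateField.adjoin ℂ
        (({algebraMap (MvPolynomial (Fin n) ℂ ⧸ vanishingIdeal ℂ (X i))
          (FractionRing (MvPolynomial (Fin n) ℂ ⧸ vanishingIdeal ℂ (X i))) (Ideal.Quotient.mk (vanishingIdeal ℂ (X i)) g)}) : Set (FractionRing (MvPolynomial (Fin n) ℂ ⧸ vanishingIdeal ℂ (X i))))) (algebraMap (MvPolynomial (Fin n) ℂ ⧸ vanishingIdeal ℂ (X i))
          (FractionRing (MvPolynomial (Fin n) ℂ ⧸ vanishingIdeal ℂ (X i))) (Ideal.Quotient.mk (vanishingIdeal ℂ (X i)) p))).coeff j) : FractionRing (MvPolynomial (Fin n) ℂ ⧸ vanishingIdeal ℂ (X i))) ∈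
            Algebra.adjoin ℂ (({algebraMap (MvPolynomial (Fin n) ℂ ⧸ vanishingIdeal ℂ (X i))
          (FractionRing (MvPolynomial (Fin n) ℂ ⧸ vanishingIdeal ℂ (X i))) (Ideal.Quotient.mk (vanishingIdeal ℂ (X i)) g)}) : Set (FractionRing (MvPolynomial (Fin n) ℂ ⧸ vanishingIdeal ℂ (X i))))) ∧
        (q i).Monic ∧ Irreducible (q i) ∧ (q i).natDegree = d i ∧
        Polynomial.map
          (Polynomial.aeval
            (⟨algebraMap (MvPolynomial (Fin n) ℂ ⧸ vanishingIdeal ℂ (X i))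
          (FractionRing (MvPolynomial (Fin n) ℂ ⧸ vanishingIdeal ℂ (X i))) (Ideal.Quotient.mk (vanishingIdeal ℂ (X i)) g),
          IntermediateField.subset_adjoin ℂ _ (Set.mem_singleton _)⟩ :
          IntermediateField.adjoin ℂ
        (({algebraMap (MvPolynomial (Fin n) ℂ ⧸ vanishingIdeal ℂ (X i))
          (FractionRing (MvPolynomial (Fin n) ℂ ⧸ vanishingIdeal ℂ (X i))) (Ideal.Quotient.mk (vanishingIdeal ℂ (X i)) g)}) : Set (FractionRing (MvPolynomial (Fin n) ℂ ⧸ vanishingIdeal ℂ (X i)))))).toRingHom (q i) =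
          minpoly (IntermediateField.adjoin ℂ
        (({algebraMap (MvPolynomial (Fin n) ℂ ⧸ vanishingIdeal ℂ (X i))
          (FractionRing (MvPolynomial (Fin n) ℂ ⧸ vanishingIdeal ℂ (X i))) (Ideal.Quotient.mk (vanishingIdeal ℂ (X i)) g)}) : Set (FractionRing (MvPolynomial (Fin n) ℂ ⧸ vanishingIdeal ℂ (X i))))) (algebraMap (MvPolynomial (Fin n) ℂ ⧸ vanishingIdeal ℂ (X i))
          (FractionRing (MvPolynomial (Fin n) ℂ ⧸ vanishingIdeal ℂ (X i))) (Ideal.Quotient.mk (vanishingIdeal ℂ (X i)) p)) := by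
  classical
  have := hprime
  have := hfin
  let I i := vanishingIdeal ℂ (X i)
  let φ i := (I i).toFractionRing ℂ
  have : ∀ i, Finite (IntermediateField ℂ⟮φ i g⟯ (FractionRing (MvPolynomial (Fin n) ℂ ⧸ I i))) :=
    fun i => finite_intermediateField_adjoin_simple_algebraMap (Ideal.Quotient.mk (I i) g)
  have htr i : Transcendental ℂ (Ideal.Quotient.mk (I i) g) :=
    transcendental_of_notMem_range (hnc i)
  have htr' i : Transcendental ℂ (φ i g) :=
    (transcendental_algebraMap_iff (IsFractionRing.injective (MvPolynomial (Fin n) ℂ ⧸ I i) _)).mpr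
      (htr i)
  have hint i (a : MvPolynomial (Fin n) ℂ) :
      (Polynomial.aeval (R := ℂ) (φ i g)).toRingHom.IsIntegralElem (φ i a) :=
    isIntegralElem_aeval_algebraMap (L := FractionRing (MvPolynomial (Fin n) ℂ ⧸ I i))
      (Ideal.Quotient.mk (I i) g) (Ideal.Quotient.mk (I i) a)
  obtain ⟨h, hh⟩ := Ideal.exists_notMem_and_mem_of_pairwise_not_le I
    fun i j hij hle => hij <| hdist <| by
      rw [← hcl i, ← hcl j]
      exact congrArg (zeroLocus ℂ) (Ideal.eq_of_le_of_transcendental hle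
        (isIntegral_aeval_of_finite_adjoin (Ideal.Quotient.mk (I j) g)) (htr i)).symm
  obtain ⟨p₀, hp₀⟩ := exists_forall_adjoin_simple_eq_top (fun i => ℂ⟮φ i g⟯) φ
    (Finset.univ.image MvPolynomial.X) fun i =>
      Ideal.adjoin_image_toFractionRing_eq_top _ (by simp [MvPolynomial.adjoin_range_X]) _
  obtain ⟨c, hprim, hq⟩ := exists_adjoin_add_smul_eq_top_and_injective (fun i => ℂ⟮φ i g⟯)
    hp₀ (fun i => minpolyOverPolynomial ℂ (φ i g)) fun i =>
      finite_setOf_minpolyOverPolynomial_add_smul_eq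
        (Ideal.toFractionRing_eq_zero_iff.not.mpr (hh i).1)
        fun c => by simpa only [map_add, map_smul] using hint i (p₀ + c • h i)
  let p := p₀ + ∑ j, c j • h j
  have hp i : φ i p = φ i p₀ + c i • φ i (h i) := by
    rw [map_add, map_sum, Finset.sum_eq_single i (fun j _ hji => by
      rw [map_smul, Ideal.toFractionRing_eq_zero_iff.mpr ((hh j).2 i hji.symm), smul_zero])
      (absurd (Finset.mem_univ i)), map_smul]
  refine ⟨p, fun i => minpolyOverPolynomial ℂ (φ i g) (φ i p), by simpa only [hp] using hq,
    fun i => ?_⟩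
  have : FiniteDimensional ℂ⟮φ i g⟯ (FractionRing (MvPolynomial (Fin n) ℂ ⧸ I i)) :=
    finiteDimensional_adjoin_simple_algebraMap (Ideal.Quotient.mk (I i) g)
  have hdeg : (minpoly ℂ⟮φ i g⟯ (φ i p)).natDegree = d i :=
    ((Field.primitive_element_iff_minpoly_natDegree_eq _ _).mp (hp i ▸ hprim i)).trans (hd i).symm
  exact ⟨hp i ▸ hprim i, minpoly.monic (isIntegral_adjoin_simple_of_isIntegralElem (hint i p)),
    hdeg, coeff_minpoly_adjoin_simple_mem (htr' i) (hint i p),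
    minpolyOverPolynomial_monic (hint i p), irreducible_minpolyOverPolynomial (htr' i) (hint i p),
    (natDegree_minpolyOverPolynomial (htr' i) (hint i p)).trans hdeg,
    map_minpolyOverPolynomial (htr' i) (hint i p)⟩

/-- Let `X₁, …, X_m` be distinct irreducible affine curves in ℂⁿ, each
equipped with a finite dominant regular function `fᵢ` to ℂ induced by a common
polynomial `g`, of degree `dᵢ = [ℂ(Xᵢ) : ℂ(fᵢ)]`.  Then there exists a polynomial
`p ∈ ℂ[z₁,…,z_n]` such that for each `i`, the restriction `pᵢ` of `p` to `Xᵢ` is a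
primitive element of `ℂ(Xᵢ)` over `ℂ(fᵢ)`, its minimal polynomial is monic of degree
`dᵢ` with coefficients in `ℂ[fᵢ]`, and the corresponding normalized irreducible
polynomials `qᵢ(s,t) ∈ ℂ[s][t]` (monic of degree `dᵢ` in `t`, with
`qᵢ(fᵢ, t)` the minimal polynomial of `pᵢ`) are pairwise distinct. -/
theorem stmt_18 (n m : ℕ) (X : Fin m → Set (Fin n → ℂ))
    (hcl : ∀ i, zeroLocus ℂ (vanishingIdeal ℂ (X i)) = X i)
    (hprime : ∀ i, (vanishingIdeal ℂ (X i)).IsPrime)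
    (hdist : Function.Injective X)
    (hcurve : ∀ i, ringKrullDim (MvPolynomial (Fin n) ℂ ⧸ vanishingIdeal ℂ (X i)) = 1)
    (g : MvPolynomial (Fin n) ℂ)
    (hnc : ∀ i, (Ideal.Quotient.mk (vanishingIdeal ℂ (X i)) g) ∉
        Set.range (algebraMap ℂ (MvPolynomial (Fin n) ℂ ⧸ vanishingIdeal ℂ (X i))))
    (hfin : ∀ i, Module.Finite
        (Algebra.adjoin ℂ (({Ideal.Quotient.mk (vanishingIdeal ℂ (X i)) g}) : Set (MvPolynomial (Fin n) ℂ ⧸ vanishingIdeal ℂ (X i))))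
        (MvPolynomial (Fin n) ℂ ⧸ vanishingIdeal ℂ (X i)))
    (d : Fin m → ℕ)
    (hd : ∀ i, haveI := hprime i;
      d i = Module.finrank
        (IntermediateField.adjoin ℂ
        (({algebraMap (MvPolynomial (Fin n) ℂ ⧸ vanishingIdeal ℂ (X i))
          (FractionRing (MvPolynomial (Fin n) ℂ ⧸ vanishingIdeal ℂ (X i))) (Ideal.Quotient.mk (vanishingIdeal ℂ (X i)) g)}) : Set (FractionRing (MvPolynomial (Fin n) ℂ ⧸ vanishingIdeal ℂ (X i)))))
        (FractionRing (MvPolynomial (Fin n) ℂ ⧸ vanishingIdeal ℂ (X i)))) :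
    ∃ (p : MvPolynomial (Fin n) ℂ) (q : Fin m → Polynomial (Polynomial ℂ)),
      Function.Injective q ∧
      ∀ i, haveI := hprime i;
        (IntermediateField.adjoin
            (IntermediateField.adjoin ℂ
        (({algebraMap (MvPolynomial (Fin n) ℂ ⧸ vanishingIdeal ℂ (X i))
          (FractionRing (MvPolynomial (Fin n) ℂ ⧸ vanishingIdeal ℂ (X i))) (Ideal.Quotient.mk (vanishingIdeal ℂ (X i)) g)}) : Set (FractionRing (MvPolynomial (Fin n) ℂ ⧸ vanishingIdeal ℂ (X i)))))
            (({algebraMap (MvPolynomial (Fin n) ℂ ⧸ vanishingIdeal ℂ (X i))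
          (FractionRing (MvPolynomial (Fin n) ℂ ⧸ vanishingIdeal ℂ (X i))) (Ideal.Quotient.mk (vanishingIdeal ℂ (X i)) p)}) : Set (FractionRing (MvPolynomial (Fin n) ℂ ⧸ vanishingIdeal ℂ (X i)))) = ⊤) ∧
        (minpoly (IntermediateField.adjoin ℂ
        (({algebraMap (MvPolynomial (Fin n) ℂ ⧸ vanishingIdeal ℂ (X i))
          (FractionRing (MvPolynomial (Fin n) ℂ ⧸ vanishingIdeal ℂ (X i))) (Ideal.Quotient.mk (vanishingIdeal ℂ (X i)) g)}) : Set (FractionRing (MvPolynomial (Fin n) ℂ ⧸ vanishingIdeal ℂ (X i))))) (algebraMap (MvPolynomial (Fin n) ℂ ⧸ vanishingIdeal ℂ (X i))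
          (FractionRing (MvPolynomial (Fin n) ℂ ⧸ vanishingIdeal ℂ (X i))) (Ideal.Quotient.mk (vanishingIdeal ℂ (X i)) p))).Monic ∧
        (minpoly (IntermediateField.adjoin ℂ
        (({algebraMap (MvPolynomial (Fin n) ℂ ⧸ vanishingIdeal ℂ (X i))
          (FractionRing (MvPolynomial (Fin n) ℂ ⧸ vanishingIdeal ℂ (X i))) (Ideal.Quotient.mk (vanishingIdeal ℂ (X i)) g)}) : Set (FractionRing (MvPolynomial (Fin n) ℂ ⧸ vanishingIdeal ℂ (X i))))) (algebraMap (MvPolynomial (Fin n) ℂ ⧸ vanishingIdeal ℂ (X i))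
          (FractionRing (MvPolynomial (Fin n) ℂ ⧸ vanishingIdeal ℂ (X i))) (Ideal.Quotient.mk (vanishingIdeal ℂ (X i)) p))).natDegree = d i ∧
        (∀ j : ℕ,
          (((minpoly (IntermediateField.adjoin ℂ
        (({algebraMap (MvPolynomial (Fin n) ℂ ⧸ vanishingIdeal ℂ (X i))
          (FractionRing (MvPolynomial (Fin n) ℂ ⧸ vanishingIdeal ℂ (X i))) (Ideal.Quotient.mk (vanishingIdeal ℂ (X i)) g)}) : Set (FractionRing (MvPolynomial (Fin n) ℂ ⧸ vanishingIdeal ℂ (X i))))) (algebraMap (MvPolynomial (Fin n) ℂ ⧸ vanishingIdeal ℂ (X i))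
          (FractionRing (MvPolynomial (Fin n) ℂ ⧸ vanishingIdeal ℂ (X i))) (Ideal.Quotient.mk (vanishingIdeal ℂ (X i)) p))).coeff j) : FractionRing (MvPolynomial (Fin n) ℂ ⧸ vanishingIdeal ℂ (X i))) ∈
            Algebra.adjoin ℂ (({algebraMap (MvPolynomial (Fin n) ℂ ⧸ vanishingIdeal ℂ (X i))
          (FractionRing (MvPolynomial (Fin n) ℂ ⧸ vanishingIdeal ℂ (X i))) (Ideal.Quotient.mk (vanishingIdeal ℂ (X i)) g)}) : Set (FractionRing (MvPolynomial (Fin n) ℂ ⧸ vanishingIdeal ℂ (X i))))) ∧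
        (q i).Monic ∧ Irreducible (q i) ∧ (q i).natDegree = d i ∧
        Polynomial.map
          (Polynomial.aeval
            (⟨algebraMap (MvPolynomial (Fin n) ℂ ⧸ vanishingIdeal ℂ (X i))
          (FractionRing (MvPolynomial (Fin n) ℂ ⧸ vanishingIdeal ℂ (X i))) (Ideal.Quotient.mk (vanishingIdeal ℂ (X i)) g),
          IntermediateField.subset_adjoin ℂ _ (Set.mem_singleton _)⟩ :
          IntermediateField.adjoin ℂ
        (({algebraMap (MvPolynomial (Fin n) ℂ ⧸ vanishingIdeal ℂ (X i))
          (FractionRing (MvPolynomial (Fin n) ℂ ⧸ vanishingIdeal ℂ (X i))) (Ideal.Quotient.mk (vanishingIdeal ℂ (X i)) g)}) : Set (FractionRing (MvPolynomial (Fin n) ℂ ⧸ vanishingIdeal ℂ (X i)))))).toRingHom (q i) =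
          minpoly (IntermediateField.adjoin ℂ
        (({algebraMap (MvPolynomial (Fin n) ℂ ⧸ vanishingIdeal ℂ (X i))
          (FractionRing (MvPolynomial (Fin n) ℂ ⧸ vanishingIdeal ℂ (X i))) (Ideal.Quotient.mk (vanishingIdeal ℂ (X i)) g)}) : Set (FractionRing (MvPolynomial (Fin n) ℂ ⧸ vanishingIdeal ℂ (X i))))) (algebraMap (MvPolynomial (Fin n) ℂ ⧸ vanishingIdeal ℂ (X i))
          (FractionRing (MvPolynomial (Fin n) ℂ ⧸ vanishingIdeal ℂ (X i))) (Ideal.Quotient.mk (vanishingIdeal ℂ (X i)) p)) :=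
  stmt_18_general n m X hcl hprime hdist g hnc hfin d hd
end
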